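/- Let L_n ⊆ S_n be a zigzag language with n ≥ 1. For any two consecutive permutations π, ρ in J(L_n), the permutation ρ is obtained from π by a jump of the value s_{n,n}^π. -/

import Mathlib

/-!
Shared definitions: permutations in one-line notation as lists of naturals,
deletion `p`, insertion `c_i`, zigzag languages, the Gray code sequence `J(L_n)`,
jumps, minimal jumps, the auxiliary sequences `s_n^π`, Algorithm M,
vincular pattern containment and 2-clumped permutations.
-/

/-- `S_n`: permutations of `{1,…,n}` in one-line notation, as lists of naturals. -/
def SymmList (n : ℕ) : Set (List ℕ) := {l | List.Perm l (List.range' 1 n)}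

/-- The identity permutation `id_n = 1 2 ⋯ n`. -/
def idPerm (n : ℕ) : List ℕ := List.range' 1 n

/-- `p(π)`: delete the largest entry `n = π.length` from the permutation `π ∈ S_n`. -/
def pdel (l : List ℕ) : List ℕ := l.erase l.length

/-- `c_i(π)`: insert the new largest value `π.length + 1` at (1-indexed) position `i`. -/
def cins (i : ℕ) (l : List ℕ) : List ℕ :=
  l.take (i - 1) ++ (l.length + 1) :: l.drop (i - 1)

/-- Zigzag languages of permutations: `L_0 = {ε}` is a zigzag language, and
`L ⊆ S_{n+1}` is a zigzag language if `p(L)` is a zigzag language and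
`c_1(π), c_{n+1}(π) ∈ L` for every `π ∈ p(L)`. -/
inductive IsZigzag : ℕ → Set (List ℕ) → Prop
  | zero : IsZigzag 0 {[]}
  | succ (n : ℕ) (L : Set (List ℕ)) :
      L ⊆ SymmList (n + 1) →
      IsZigzag n (pdel '' L) →
      (∀ l ∈ pdel '' L, cins 1 l ∈ L ∧ cins (n + 1) l ∈ L) →
      IsZigzag (n + 1) L

/-- `→c(π)`: the sequence of those `c_1(π),…,c_n(π)` lying in `L`,
in increasing order of the insertion position. -/
noncomputable def cSeq (L : Set (List ℕ)) (n : ℕ) (l : List ℕ) : List (List ℕ) :=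
  ((List.range' 1 n).map (fun i => cins i l)).filter
    (fun x => @decide (x ∈ L) (Classical.propDecidable _))

/-- The Gray code sequence `J(L_n)` of a language `L ⊆ S_n`:
`J(L_0) = ε`, and `J(L_{n+1})` is obtained from `J(L_n)` (for the language
`p(L)`) by replacing its entries alternately by `←c(π)` (the reverse of
`→c(π)`) and `→c(π)`. -/
noncomputable def Jseq : ℕ → Set (List ℕ) → List (List ℕ)
  | 0, _ => [[]]
  | (n + 1), L =>
      (((Jseq n (pdel '' L)).mapIdx
        (fun k π => if k % 2 = 0 then (cSeq L (n + 1) π).reverse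
                    else cSeq L (n + 1) π)).flatten)

/-- `ρ` is obtained from `π` by a right jump of the value `v` by `d` steps. -/
def RightJump (π ρ : List ℕ) (v d : ℕ) : Prop :=
  0 < d ∧ ∃ A B C : List ℕ, B.length = d ∧ (∀ x ∈ B, x < v) ∧
    π = A ++ v :: (B ++ C) ∧ ρ = A ++ (B ++ v :: C)

/-- `ρ` is obtained from `π` by a left jump of the value `v` by `d` steps. -/
def LeftJump (π ρ : List ℕ) (v d : ℕ) : Prop := RightJump ρ π v d

/-- A right jump that is minimal with respect to `L`: every right jump of the
same value by fewer steps yields a permutation not in `L`. -/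
def MinimalRightJump (L : Set (List ℕ)) (π ρ : List ℕ) (v d : ℕ) : Prop :=
  RightJump π ρ v d ∧ ∀ d' ρ', d' < d → RightJump π ρ' v d' → ρ' ∉ L

/-- A left jump that is minimal with respect to `L`. -/
def MinimalLeftJump (L : Set (List ℕ)) (π ρ : List ℕ) (v d : ℕ) : Prop :=
  LeftJump π ρ v d ∧ ∀ d' ρ', d' < d → LeftJump π ρ' v d' → ρ' ∉ L

/-- The auxiliary sequence `s_n^π` of a permutation `π` occurring in `J(L_n)`,
as a function of the index `i ∈ {1,…,n}` (value `0` outside this range). -/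
noncomputable def sVec : ℕ → Set (List ℕ) → List ℕ → ℕ → ℕ
  | 0, _, _, _ => 0
  | 1, _, _, i => if i = 1 then 1 else 0
  | (n + 2), L, π, i =>
      let L' := pdel '' L
      let π' := pdel π
      let cbar := if ((Jseq (n + 1) L').idxOf π') % 2 = 0
                  then (cSeq L (n + 2) π').reverse else cSeq L (n + 2) π'
      if cbar.getLast? = some π then
        (if i ≤ n then sVec (n + 1) L' π' i
         else if i = n + 1 then n + 1
         else if i = n + 2 then sVec (n + 1) L' π' (n + 1) else 0)
      else
        (if i ≤ n + 1 then sVec (n + 1) L' π' i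
         else if i = n + 2 then n + 2 else 0)

/-- `j` is at the first position of `l`, or the entry immediately left of `j`
in `l` is larger than `j`. -/
def AtLeftTurn (l : List ℕ) (j : ℕ) : Prop :=
  ∃ A B : List ℕ, l = A ++ j :: B ∧ (A = [] ∨ ∃ x, A.getLast? = some x ∧ j < x)

/-- `j` is at the last position of `l`, or the entry immediately right of `j`
in `l` is larger than `j`. -/
def AtRightTurn (l : List ℕ) (j : ℕ) : Prop :=
  ∃ A B : List ℕ, l = A ++ j :: B ∧ (B = [] ∨ ∃ x, B.head? = some x ∧ j < x)

/-- `j` is not at the first position of `l`, and the entry immediately left of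
`j` in `l` is smaller than `j`. -/
def SmallerLeftNeighbor (l : List ℕ) (j : ℕ) : Prop :=
  ∃ A B : List ℕ, ∃ x, l = A ++ j :: B ∧ A.getLast? = some x ∧ x < j

/-- `j` is not at the last position of `l`, and the entry immediately right of
`j` in `l` is smaller than `j`. -/
def SmallerRightNeighbor (l : List ℕ) (j : ℕ) : Prop :=
  ∃ A B : List ℕ, ∃ x, l = A ++ j :: B ∧ B.head? = some x ∧ x < j

/-- A state of Algorithm M: the current permutation `π` and the auxiliary
arrays `o` and `s`; `o j = false` encodes direction `L` (left) and
`o j = true` encodes `R` (right). -/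
structure MState where
  perm : List ℕ
  o : ℕ → Bool
  s : ℕ → ℕ

/-- The initial state of Algorithm M (step M1): `π = id_n`, `o_j = L`, `s_j = j`. -/
def MInit (n : ℕ) : MState := ⟨idPerm n, fun _ => false, fun j => j⟩

/-- One iteration (steps M3–M5) of Algorithm M on a language `L ⊆ S_n`:
with `j := s_n ≠ 1`, the permutation jumps minimally in the direction `o_j`
(step M4), and the arrays `o`, `s` are updated as in step M5. -/
def MStep (L : Set (List ℕ)) (n : ℕ) (σ σ' : MState) : Prop :=
  σ.s n ≠ 1 ∧
  σ'.perm ∈ L ∧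
  ((σ.o (σ.s n) = false ∧ ∃ d, MinimalLeftJump L σ.perm σ'.perm (σ.s n) d) ∨
   (σ.o (σ.s n) = true ∧ ∃ d, MinimalRightJump L σ.perm σ'.perm (σ.s n) d)) ∧
  (((σ.o (σ.s n) = false ∧ AtLeftTurn σ'.perm (σ.s n)) ∨
    (σ.o (σ.s n) = true ∧ AtRightTurn σ'.perm (σ.s n))) →
      σ'.o = Function.update σ.o (σ.s n) (!σ.o (σ.s n)) ∧
      σ'.s = Function.update (Function.update (Function.update σ.s n n) (σ.s n)
               ((Function.update σ.s n n) (σ.s n - 1))) (σ.s n - 1) (σ.s n - 1)) ∧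
  (¬ ((σ.o (σ.s n) = false ∧ AtLeftTurn σ'.perm (σ.s n)) ∨
      (σ.o (σ.s n) = true ∧ AtRightTurn σ'.perm (σ.s n))) →
      σ'.o = σ.o ∧ σ'.s = Function.update σ.s n n)

/-- `π` contains the vincular pattern `pat` whose marked adjacent pair starts
at (0-indexed) position `k` of `pat`. -/
def ContainsVincular (π pat : List ℕ) (k : ℕ) : Prop :=
  ∃ f : ℕ → ℕ, StrictMonoOn f (Set.Iio pat.length) ∧
    (∀ i < pat.length, f i < π.length) ∧
    f (k + 1) = f k + 1 ∧
    (∀ i < pat.length, ∀ j < pat.length,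
      (pat.getD i 0 < pat.getD j 0 ↔ π.getD (f i) 0 < π.getD (f j) 0))

/-- 2-clumped permutations: those avoiding the vincular patterns
`3(51)24`, `3(51)42`, `24(51)3` and `42(51)3`. -/
def TwoClumped (π : List ℕ) : Prop :=
  ¬ ContainsVincular π [3, 5, 1, 2, 4] 1 ∧ ¬ ContainsVincular π [3, 5, 1, 4, 2] 1 ∧
  ¬ ContainsVincular π [2, 4, 5, 1, 3] 2 ∧ ¬ ContainsVincular π [4, 2, 5, 1, 3] 2

/-- `S'_n`: the set of 2-clumped permutations in `S_n`. -/
def SClump (n : ℕ) : Set (List ℕ) := {l ∈ SymmList n | TwoClumped l}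

/-- `B_n`: the permutations obtained from `1` by repeatedly inserting the new
largest value at the first or the last position. -/
def Bset : ℕ → Set (List ℕ)
  | 0 => {[]}
  | 1 => {[1]}
  | (n + 2) => {l | ∃ π ∈ Bset (n + 1), l = cins 1 π ∨ l = cins (n + 2) π}

/-!
Two consecutive entries `π, ρ` of `J(L_n)` either lie in one block `c̄(π')`, where they differ
only in the position of `n`, so that `ρ` arises from `π` by a jump of `n`; and since `π` is not
the last entry of its block, `s_{n,n}^π = n`. Or `π` ends the block of `π_j` and `ρ` starts the
block of `π_{j+1}`. As `←c` and `→c` alternate, both then carry `n` at the same end (first if `j`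
is even, last otherwise), so `ρ` arises from `π` by the jump taking `π_j` to `π_{j+1}`, whose
value is `s_{n-1,n-1}^{π_j} = s_{n,n}^π` by induction.
-/

open List

section Insertion

variable {n : ℕ} {l : List ℕ}

lemma length_of_mem_symmList (h : l ∈ SymmList n) : l.length = n := by
  simpa using h.length_eq

lemma lt_length_succ_of_mem_symmList (h : l ∈ SymmList n) : ∀ x ∈ l, x < l.length + 1 := by
  intro x hx
  have := h.mem_iff.1 hx
  rw [mem_range'_1] at this
  rw [length_of_mem_symmList h]
  omega

lemma length_succ_not_mem_of_mem_symmList (h : l ∈ SymmList n) : l.length + 1 ∉ l :=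
  fun hl => (lt_length_succ_of_mem_symmList h _ hl).false

lemma length_cins (i : ℕ) (l : List ℕ) : (cins i l).length = l.length + 1 := by
  simp [cins]
  omega

lemma cins_one_eq_cons (l : List ℕ) : cins 1 l = (l.length + 1) :: l := by
  simp [cins]

lemma cins_length_succ_eq_concat (l : List ℕ) : cins (l.length + 1) l = l ++ [l.length + 1] := by
  simp [cins]

lemma pdel_cins (h : l.length + 1 ∉ l) (i : ℕ) : pdel (cins i l) = l := by
  have h' : l.length + 1 ∉ l.take (i - 1) := fun hx => h (take_subset _ _ hx)
  rw [pdel, length_cins, cins, erase_append_right _ h', erase_cons_head, take_append_drop]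

lemma idxOf_cins (h : l.length + 1 ∉ l) (i : ℕ) :
    (cins i l).idxOf (l.length + 1) = min (i - 1) l.length := by
  have h' : l.length + 1 ∉ l.take (i - 1) := fun hx => h (take_subset _ _ hx)
  rw [cins, idxOf_append_of_notMem h', idxOf_cons_self, length_take]
  rfl

lemma cins_injOn (h : l.length + 1 ∉ l) {i j : ℕ} (hi : i ∈ Set.Icc 1 (l.length + 1))
    (hj : j ∈ Set.Icc 1 (l.length + 1)) (he : cins i l = cins j l) : i = j := by
  have := idxOf_cins h i
  rw [he, idxOf_cins h j] at this
  simp only [Set.mem_Icc] at hi hj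
  omega

end Insertion

def IsJump (π ρ : List ℕ) (v : ℕ) : Prop :=
  ∃ d, LeftJump π ρ v d ∨ RightJump π ρ v d

section Jumps

variable {π ρ : List ℕ} {v d : ℕ}

lemma RightJump.length_eq (h : RightJump π ρ v d) : π.length = ρ.length := by
  obtain ⟨-, A, B, C, -, -, rfl, rfl⟩ := h
  simp
  omega

lemma RightJump.cins_one (h : RightJump π ρ v d) : RightJump (cins 1 π) (cins 1 ρ) v d := by
  have hlen := h.length_eq
  obtain ⟨hd, A, B, C, hB, hv, hπ, hρ⟩ := h
  refine ⟨hd, (π.length + 1) :: A, B, C, hB, hv, ?_, ?_⟩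
  · rw [cins_one_eq_cons, hπ, cons_append]
  · rw [cins_one_eq_cons, ← hlen, hρ, cons_append]

lemma RightJump.cins_length_succ (h : RightJump π ρ v d) :
    RightJump (cins (π.length + 1) π) (cins (π.length + 1) ρ) v d := by
  have hlen := h.length_eq
  obtain ⟨hd, A, B, C, hB, hv, hπ, hρ⟩ := h
  refine ⟨hd, A, B, C ++ [π.length + 1], hB, hv, ?_, ?_⟩
  · rw [cins_length_succ_eq_concat, hπ]
    simp
  · rw [hlen, cins_length_succ_eq_concat, hρ]
    simp

lemma IsJump.cins {i : ℕ} (h : IsJump π ρ v) (hi : i = 1 ∨ i = π.length + 1) :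
    IsJump (cins i π) (cins i ρ) v := by
  obtain ⟨d, hleft | hright⟩ := h
  · have hlen := hleft.length_eq
    refine ⟨d, Or.inl ?_⟩
    rcases hi with rfl | rfl
    · exact hleft.cins_one
    · rw [← hlen]
      exact hleft.cins_length_succ
  · refine ⟨d, Or.inr ?_⟩
    rcases hi with rfl | rfl
    · exact hright.cins_one
    · exact hright.cins_length_succ

lemma rightJump_cins_cins {l : List ℕ} (hl : ∀ x ∈ l, x < l.length + 1) {i j : ℕ} (hi : 1 ≤ i) (hij : i < j)
    (hj : j ≤ l.length + 1) : RightJump (cins i l) (cins j l) (l.length + 1) (j - i) := by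
  refine ⟨by omega, l.take (i - 1), (l.drop (i - 1)).take (j - i), l.drop (j - 1), ?_,
    fun x hx => hl x (drop_subset _ _ (take_subset _ _ hx)), ?_, ?_⟩
  · rw [length_take, length_drop]
    omega
  · rw [cins, show j - 1 = i - 1 + (j - i) by omega, ← drop_drop, take_append_drop]
  · rw [cins, show j - 1 = i - 1 + (j - i) by omega, take_add, append_assoc]

lemma isJump_cins_cins {l : List ℕ} (hl : ∀ x ∈ l, x < l.length + 1) {i j : ℕ}
    (hi : i ∈ Set.Icc 1 (l.length + 1)) (hj : j ∈ Set.Icc 1 (l.length + 1)) (hij : i ≠ j) :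
    IsJump (cins i l) (cins j l) (l.length + 1) := by
  simp only [Set.mem_Icc] at hi hj
  rcases Nat.lt_or_gt_of_ne hij with h | h
  · exact ⟨j - i, Or.inr (rightJump_cins_cins hl hi.1 h hj.2)⟩
  · exact ⟨i - j, Or.inl (rightJump_cins_cins hl hj.1 h hi.2)⟩

end Jumps

section Blocks

variable {L : Set (List ℕ)} {n : ℕ} {l : List ℕ}

lemma mem_cSeq {x : List ℕ} :
    x ∈ cSeq L n l ↔ (∃ i ∈ Set.Icc 1 n, x = cins i l) ∧ x ∈ L := by
  simp only [cSeq, mem_filter, mem_map, mem_range'_1, decide_eq_true_eq, Set.mem_Icc]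
  constructor <;> rintro ⟨⟨i, hi, rfl⟩, hx⟩ <;> exact ⟨⟨i, by omega, rfl⟩, hx⟩

lemma cSeq_nodup (h : l.length + 1 ∉ l) (hn : n ≤ l.length + 1) : (cSeq L n l).Nodup := by
  refine (Nodup.map_on ?_ (nodup_range' 1 Nat.one_pos)).filter _
  intro i hi j hj
  rw [mem_range'_1] at hi hj
  exact cins_injOn h ⟨hi.1, by omega⟩ ⟨hj.1, by omega⟩

lemma cSeq_head? (h : cins 1 l ∈ L) : (cSeq L (n + 1) l).head? = some (cins 1 l) := by
  rw [cSeq, range'_succ, map_cons, filter_cons_of_pos (by simpa using h)]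
  rfl

lemma cSeq_getLast? (h : cins (n + 1) l ∈ L) :
    (cSeq L (n + 1) l).getLast? = some (cins (n + 1) l) := by
  rw [cSeq, range'_concat, show 1 + 1 * n = n + 1 by omega, map_append, filter_append,
    getLast?_append]
  simp [h]

/-- `k` is the 0-based index of `l` in `J(L_{n-1})`: even `k` is an odd position in the paper's
1-based count, hence the reversed block. -/
noncomputable def cBar (L : Set (List ℕ)) (n k : ℕ) (l : List ℕ) : List (List ℕ) :=
  if k % 2 = 0 then (cSeq L n l).reverse else cSeq L n l

lemma mem_cBar {k : ℕ} {x : List ℕ} : x ∈ cBar L n k l ↔ x ∈ cSeq L n l := by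
  unfold cBar
  split_ifs <;> simp

lemma cBar_nodup {k : ℕ} (h : l.length + 1 ∉ l) (hn : n ≤ l.length + 1) :
    (cBar L n k l).Nodup := by
  unfold cBar
  split_ifs
  · exact nodup_reverse.2 (cSeq_nodup h hn)
  · exact cSeq_nodup h hn

lemma cBar_ne_nil {k : ℕ} (hfirst : cins 1 l ∈ L) : cBar L (n + 1) k l ≠ [] :=
  ne_nil_of_mem (mem_cBar.2 (mem_cSeq.2 ⟨⟨1, ⟨le_rfl, by omega⟩, rfl⟩, hfirst⟩))

lemma cBar_head? {k : ℕ} (hfirst : cins 1 l ∈ L) (hlast : cins (n + 1) l ∈ L) :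
    (cBar L (n + 1) k l).head? = some (cins (if k % 2 = 0 then n + 1 else 1) l) := by
  unfold cBar
  split_ifs
  · rw [head?_reverse, cSeq_getLast? hlast]
  · rw [cSeq_head? hfirst]

lemma cBar_getLast? {k : ℕ} (hfirst : cins 1 l ∈ L) (hlast : cins (n + 1) l ∈ L) :
    (cBar L (n + 1) k l).getLast? = some (cins (if k % 2 = 0 then 1 else n + 1) l) := by
  unfold cBar
  split_ifs
  · rw [getLast?_reverse, cSeq_head? hfirst]
  · rw [cSeq_getLast? hlast]

end Blocks

namespace List

variable {α : Type*}

lemma Nodup.getElem?_inj {l : List α} (hl : l.Nodup) {i j : ℕ} {x : α} (hi : l[i]? = some x)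
    (hj : l[j]? = some x) : i = j := by
  obtain ⟨hi, rfl⟩ := getElem?_eq_some_iff.1 hi
  obtain ⟨hj, hij⟩ := getElem?_eq_some_iff.1 hj
  exact hl.getElem_inj_iff.1 hij.symm

lemma Nodup.idxOf_eq_of_getElem? [BEq α] [LawfulBEq α] {l : List α} (hl : l.Nodup) {i : ℕ}
    {x : α} (hi : l[i]? = some x) : l.idxOf x = i := by
  obtain ⟨hlt, rfl⟩ := getElem?_eq_some_iff.1 hi
  exact hl.idxOf_getElem i hlt

lemma nodup_flatten_mapIdx {β : Type*} {f : ℕ → α → List β} {g : β → α} {l : List α}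
    (hl : l.Nodup) (hf : ∀ i, ∀ a ∈ l, (f i a).Nodup) (hg : ∀ i, ∀ a ∈ l, ∀ x ∈ f i a, g x = a) :
    (l.mapIdx f).flatten.Nodup := by
  induction l generalizing f with
  | nil => simp
  | cons a l ih =>
    rw [nodup_cons] at hl
    rw [mapIdx_cons, flatten_cons, nodup_append]
    refine ⟨hf 0 a mem_cons_self,
      ih hl.2 (fun i b hb => hf _ b (mem_cons_of_mem _ hb))
        (fun i b hb => hg _ b (mem_cons_of_mem _ hb)), ?_⟩
    rintro x hx _ hy rfl
    obtain ⟨b, hb, hxb⟩ := mem_flatten.1 hy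
    obtain ⟨i, hi, rfl⟩ := mem_mapIdx.1 hb
    exact hl.1 (hg 0 a mem_cons_self x hx ▸ hg _ _ (mem_cons_of_mem _ (getElem_mem hi)) x hxb ▸
      getElem_mem hi)

lemma getElem?_flatten_succ_cases {bs : List (List α)} (hne : ∀ b ∈ bs, b ≠ []) {k : ℕ}
    {x y : α} (hx : bs.flatten[k]? = some x) (hy : bs.flatten[k + 1]? = some y) :
    (∃ (j : ℕ) (b : List α) (a : ℕ), bs[j]? = some b ∧ b[a]? = some x ∧ b[a + 1]? = some y) ∨
    (∃ (j : ℕ) (b b' : List α), bs[j]? = some b ∧ bs[j + 1]? = some b' ∧ b.getLast? = some x ∧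
      b'.head? = some y) := by
  induction bs generalizing k with
  | nil => simp at hx
  | cons b bs ih =>
    rw [flatten_cons] at hx hy
    rcases lt_trichotomy (k + 1) b.length with hk | hk | hk
    · rw [getElem?_append_left (by omega)] at hx
      rw [getElem?_append_left hk] at hy
      exact Or.inl ⟨0, b, k, rfl, hx, hy⟩
    · rw [getElem?_append_left (by omega)] at hx
      rw [getElem?_append_right hk.ge, hk, Nat.sub_self] at hy
      obtain _ | ⟨b', bs⟩ := bs
      · simp at hy
      · rw [flatten_cons, getElem?_append_left
          (length_pos_iff.2 (hne b' (by simp)))] at hy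
        refine Or.inr ⟨0, b, b', rfl, rfl, ?_, ?_⟩
        · rwa [getLast?_eq_getElem?, ← hk]
        · rwa [head?_eq_getElem?]
    · rw [getElem?_append_right (by omega)] at hx hy
      rw [show k + 1 - b.length = k - b.length + 1 by omega] at hy
      rcases ih (fun b hb => hne b (mem_cons_of_mem _ hb)) hx hy with
        ⟨j, c, a, hc, hxc, hyc⟩ | ⟨j, c, c', hc, hc', hlast, hhead⟩
      · exact Or.inl ⟨j + 1, c, a, hc, hxc, hyc⟩
      · exact Or.inr ⟨j + 1, c, c', hc, hc', hlast, hhead⟩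

end List

section Zigzag

variable {n : ℕ} {L : Set (List ℕ)}

lemma Jseq_succ (n : ℕ) (L : Set (List ℕ)) :
    Jseq (n + 1) L = ((Jseq n (pdel '' L)).mapIdx (cBar L (n + 1))).flatten :=
  rfl

lemma IsZigzag.subset_symmList (h : IsZigzag n L) : L ⊆ SymmList n := by
  cases h with
  | zero => simp [SymmList]
  | succ n L hsub _ _ => exact hsub

lemma IsZigzag.image_pdel (h : IsZigzag (n + 1) L) : IsZigzag n (pdel '' L) := by
  cases h with
  | succ n L _ hzig _ => exact hzig

lemma IsZigzag.cins_mem (h : IsZigzag (n + 1) L) {l : List ℕ} (hl : l ∈ pdel '' L) :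
    cins 1 l ∈ L ∧ cins (n + 1) l ∈ L := by
  cases h with
  | succ n L _ _ hcins => exact hcins l hl

lemma mem_of_mem_Jseq (h : IsZigzag n L) {x : List ℕ} (hx : x ∈ Jseq n L) : x ∈ L := by
  cases h with
  | zero => simpa [Jseq] using hx
  | succ n L _ _ _ =>
    obtain ⟨b, hb, hxb⟩ := mem_flatten.1 hx
    obtain ⟨i, hi, rfl⟩ := mem_mapIdx.1 hb
    exact (mem_cSeq.1 (mem_cBar.1 hxb)).2

lemma Jseq_nodup (h : IsZigzag n L) : (Jseq n L).Nodup := by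
  induction h with
  | zero => simp [Jseq]
  | succ n L _ hzig _ ih =>
    have hS {l} (hl : l ∈ Jseq n (pdel '' L)) : l ∈ SymmList n :=
      hzig.subset_symmList (mem_of_mem_Jseq hzig hl)
    refine nodup_flatten_mapIdx (g := pdel) ih (fun i l hl => ?_) (fun i l hl x hx => ?_)
    · exact cBar_nodup (length_succ_not_mem_of_mem_symmList (hS hl))
        (by rw [length_of_mem_symmList (hS hl)])
    · obtain ⟨⟨j, -, rfl⟩, -⟩ := mem_cSeq.1 (mem_cBar.1 hx)
      exact pdel_cins (length_succ_not_mem_of_mem_symmList (hS hl)) j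

lemma getElem?_Jseq_one_succ (L : Set (List ℕ)) (k : ℕ) : (Jseq 1 L)[k + 1]? = none := by
  have hlen : (cSeq L 1 []).length ≤ 1 := (length_filter_le _ _).trans (by simp)
  simp [Jseq]
  omega

end Zigzag

lemma sVec_succ_succ_self (m : ℕ) (L : Set (List ℕ)) (π : List ℕ) :
    sVec (m + 2) L π (m + 2) =
      if (cBar L (m + 2) ((Jseq (m + 1) (pdel '' L)).idxOf (pdel π)) (pdel π)).getLast? = some π
      then sVec (m + 1) (pdel '' L) (pdel π) (m + 1) else m + 2 := by
  simp only [sVec, cBar]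
  split_ifs <;> omega

section Step

variable {m : ℕ} {L : Set (List ℕ)}

lemma isJump_sVec_of_mem_block (hzig : IsZigzag (m + 1) (pdel '' L)) {j a : ℕ}
    {π' π ρ : List ℕ} (hπ' : (Jseq (m + 1) (pdel '' L))[j]? = some π')
    (hπ : (cBar L (m + 2) j π')[a]? = some π) (hρ : (cBar L (m + 2) j π')[a + 1]? = some ρ) :
    IsJump π ρ (sVec (m + 2) L π (m + 2)) := by
  have hS : π' ∈ SymmList (m + 1) :=
    hzig.subset_symmList (mem_of_mem_Jseq hzig (mem_of_getElem? hπ'))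
  have hlen := length_of_mem_symmList hS
  have hfresh := length_succ_not_mem_of_mem_symmList hS
  have hnd : (cBar L (m + 2) j π').Nodup := cBar_nodup hfresh (by omega)
  obtain ⟨⟨i₁, hi₁, rfl⟩, -⟩ := mem_cSeq.1 (mem_cBar.1 (mem_of_getElem? hπ))
  obtain ⟨⟨i₂, hi₂, rfl⟩, -⟩ := mem_cSeq.1 (mem_cBar.1 (mem_of_getElem? hρ))
  have hnot_last : (cBar L (m + 2) j π').getLast? ≠ some (cins i₁ π') := by
    rw [getLast?_eq_getElem?]
    intro h
    have := hnd.getElem?_inj h hπ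
    have := (List.getElem?_eq_some_iff.1 hρ).1
    omega
  have hne : i₁ ≠ i₂ := by
    rintro rfl
    exact absurd (hnd.getElem?_inj hπ hρ) (by omega)
  rw [sVec_succ_succ_self, pdel_cins hfresh, (Jseq_nodup hzig).idxOf_eq_of_getElem? hπ',
    if_neg hnot_last]
  rw [show m + 2 = π'.length + 1 by omega] at hi₁ hi₂ ⊢
  exact isJump_cins_cins (lt_length_succ_of_mem_symmList hS) hi₁ hi₂ hne

lemma isJump_sVec_of_block_boundary (hL : IsZigzag (m + 2) L) {j : ℕ} {π₁ π₂ π ρ : List ℕ}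
    (hπ₁ : (Jseq (m + 1) (pdel '' L))[j]? = some π₁)
    (hπ₂ : (Jseq (m + 1) (pdel '' L))[j + 1]? = some π₂)
    (hπ : (cBar L (m + 2) j π₁).getLast? = some π)
    (hρ : (cBar L (m + 2) (j + 1) π₂).head? = some ρ)
    (hjump : IsJump π₁ π₂ (sVec (m + 1) (pdel '' L) π₁ (m + 1))) :
    IsJump π ρ (sVec (m + 2) L π (m + 2)) := by
  have hzig := hL.image_pdel
  have hS : π₁ ∈ SymmList (m + 1) :=
    hzig.subset_symmList (mem_of_mem_Jseq hzig (mem_of_getElem? hπ₁))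
  obtain ⟨hfirst₁, hlast₁⟩ := hL.cins_mem (mem_of_mem_Jseq hzig (mem_of_getElem? hπ₁))
  obtain ⟨hfirst₂, hlast₂⟩ := hL.cins_mem (mem_of_mem_Jseq hzig (mem_of_getElem? hπ₂))
  have hsame_end : (if (j + 1) % 2 = 0 then m + 2 else 1) = if j % 2 = 0 then 1 else m + 2 := by
    split_ifs <;> omega
  have hπ_eq := hπ
  rw [cBar_getLast? hfirst₁ hlast₁, Option.some_inj] at hπ_eq
  rw [cBar_head? hfirst₂ hlast₂, Option.some_inj, hsame_end] at hρ
  subst hπ_eq hρ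
  rw [sVec_succ_succ_self, pdel_cins (length_succ_not_mem_of_mem_symmList hS),
    (Jseq_nodup hzig).idxOf_eq_of_getElem? hπ₁, if_pos hπ]
  refine hjump.cins ?_
  rw [length_of_mem_symmList hS]
  split_ifs <;> simp

lemma isJump_sVec_succ_succ (hL : IsZigzag (m + 2) L)
    (ih : ∀ k π ρ, (Jseq (m + 1) (pdel '' L))[k]? = some π →
      (Jseq (m + 1) (pdel '' L))[k + 1]? = some ρ →
      IsJump π ρ (sVec (m + 1) (pdel '' L) π (m + 1)))
    {k : ℕ} {π ρ : List ℕ} (hπ : (Jseq (m + 2) L)[k]? = some π)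
    (hρ : (Jseq (m + 2) L)[k + 1]? = some ρ) :
    IsJump π ρ (sVec (m + 2) L π (m + 2)) := by
  have hne : ∀ b ∈ (Jseq (m + 1) (pdel '' L)).mapIdx (cBar L (m + 2)), b ≠ [] := by
    intro b hb
    obtain ⟨i, hi, rfl⟩ := mem_mapIdx.1 hb
    exact cBar_ne_nil (hL.cins_mem (mem_of_mem_Jseq hL.image_pdel (getElem_mem hi))).1
  rw [Jseq_succ] at hπ hρ
  rcases getElem?_flatten_succ_cases hne hπ hρ with
    ⟨j, b, a, hb, hπb, hρb⟩ | ⟨j, b, b', hb, hb', hlast, hhead⟩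
  · rw [getElem?_mapIdx, Option.map_eq_some_iff] at hb
    obtain ⟨π', hπ', rfl⟩ := hb
    exact isJump_sVec_of_mem_block hL.image_pdel hπ' hπb hρb
  · rw [getElem?_mapIdx, Option.map_eq_some_iff] at hb hb'
    obtain ⟨π₁, hπ₁, rfl⟩ := hb
    obtain ⟨π₂, hπ₂, rfl⟩ := hb'
    exact isJump_sVec_of_block_boundary hL hπ₁ hπ₂ hlast hhead (ih j π₁ π₂ hπ₁ hπ₂)

end Step

theorem Jseq_jump_value_is_sVec_general (n : ℕ) (L : Set (List ℕ))
    (hL : IsZigzag n L) (k : ℕ) (π ρ : List ℕ)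
    (hπ : (Jseq n L)[k]? = some π) (hρ : (Jseq n L)[k + 1]? = some ρ) :
    ∃ d, LeftJump π ρ (sVec n L π n) d ∨ RightJump π ρ (sVec n L π n) d := by
  induction n using Nat.twoStepInduction generalizing L k π ρ with
  | zero => simp [Jseq] at hρ
  | one => simp [getElem?_Jseq_one_succ] at hρ
  | more m _ ih =>
    exact isJump_sVec_succ_succ hL (fun k π ρ => ih (pdel '' L) hL.image_pdel k π ρ) hπ hρ

/-- Let `L_n ⊆ S_n` be a zigzag language with `n ≥ 1`. For any
two consecutive permutations `π, ρ` in `J(L_n)`, the permutation `ρ` is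
obtained from `π` by a jump of the value `s_{n,n}^π`. -/
theorem Jseq_jump_value_is_sVec (n : ℕ) (hn : 1 ≤ n) (L : Set (List ℕ))
    (hL : IsZigzag n L) (k : ℕ) (π ρ : List ℕ)
    (hπ : (Jseq n L)[k]? = some π) (hρ : (Jseq n L)[k + 1]? = some ρ) :
    ∃ d, LeftJump π ρ (sVec n L π n) d ∨ RightJump π ρ (sVec n L π n) d :=
  Jseq_jump_value_is_sVec_general n L hL k π ρ hπ hρ
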